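/- arXiv:2412.20354 — 2 statements merged into one kernel-verified Lean document; each statement's English description precedes it below -/
import Mathlib

section
/- Let x* be a fixed point of a quasi-nonexpansive map T on a real Hilbert space, let f be differentiable with ∇f satisfying the contraction property ‖x − y − β(∇f(x) − ∇f(y))‖ ≤ (1−γ)‖x − y‖ for some γ ∈ (0,1], and let α_t ∈ [0,1]. Then the sequence x_{t+1} = α_t(x_t − β∇f(x_t)) + (1−α_t)T̂(x_t), where T̂ = (1−η)Id + ηT with η ∈ (0,1], satisfies ‖x_t − x*‖ ≤ max{‖x_0 − x*‖, β‖∇f(x*)‖/γ} for all t; in particular the sequence is bounded. -/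
/-- Boundedness of the iterates: with T quasi-nonexpansive at its fixed point x*,
the gradient step a (1−γ)-contraction, and α_t ∈ [0,1], the sequence
x_{t+1} = α_t(x_t − β∇f(x_t)) + (1−α_t)T̂(x_t) with T̂ = (1−η)Id + ηT satisfies
‖x_t − x*‖ ≤ max{‖x_0 − x*‖, β‖∇f(x*)‖/γ}; in particular it is bounded. -/
theorem iterates_bounded
    {H : Type*} [NormedAddCommGroup H] [InnerProductSpace ℝ H]
    (T : H → H) (xstar : H) (hfix : T xstar = xstar)
    (hquasi : ∀ x, ‖T x - xstar‖ ≤ ‖x - xstar‖)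
    (f : H → ℝ) (f' : H → H)
    (β γ η : ℝ) (hβ : 0 < β) (hγ : γ ∈ Set.Ioc (0 : ℝ) 1)
    (hη : η ∈ Set.Ioc (0 : ℝ) 1)
    (hcontr : ∀ x y, ‖x - y - β • (f' x - f' y)‖ ≤ (1 - γ) * ‖x - y‖)
    (α : ℕ → ℝ) (hα : ∀ t, α t ∈ Set.Icc (0 : ℝ) 1)
    (x : ℕ → H)
    (hrec : ∀ t, x (t + 1) =
      α t • (x t - β • f' (x t)) +
        (1 - α t) • ((1 - η) • x t + η • T (x t))) :
    ∀ t, ‖x t - xstar‖ ≤ max ‖x 0 - xstar‖ (β * ‖f' xstar‖ / γ) := by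
  obtain ⟨hγ0, hγ1⟩ := hγ
  obtain ⟨hη0, hη1⟩ := hη
  set M := max ‖x 0 - xstar‖ (β * ‖f' xstar‖ / γ) with hM
  have hM0 : (0:ℝ) ≤ M := le_trans (norm_nonneg _) (le_max_left _ _)
  have hβF : β * ‖f' xstar‖ ≤ γ * M := by
    have : β * ‖f' xstar‖ / γ ≤ M := le_max_right _ _
    rw [div_le_iff₀ hγ0] at this
    linarith [this]
  intro t
  induction t with
  | zero => exact le_max_left _ _
  | succ t ih =>
    obtain ⟨hα0, hα1⟩ := hα t
    -- gradient step bound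
    have hgrad : ‖x t - β • f' (x t) - xstar‖ ≤ (1 - γ) * ‖x t - xstar‖ + β * ‖f' xstar‖ := by
      have h1 : x t - β • f' (x t) - xstar
          = (x t - xstar - β • (f' (x t) - f' xstar)) + (-β) • f' xstar := by
        simp [smul_sub]; abel
      calc ‖x t - β • f' (x t) - xstar‖
          ≤ ‖x t - xstar - β • (f' (x t) - f' xstar)‖ + ‖(-β) • f' xstar‖ := by
            rw [h1]; exact norm_add_le _ _
        _ ≤ (1 - γ) * ‖x t - xstar‖ + β * ‖f' xstar‖ := by
            have := hcontr (x t) xstar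
            rw [norm_smul]
            simp only [norm_neg, Real.norm_eq_abs, abs_of_pos hβ]
            linarith
    -- T̂ step bound
    have hThat : ‖(1 - η) • x t + η • T (x t) - xstar‖ ≤ ‖x t - xstar‖ := by
      have h2 : (1 - η) • x t + η • T (x t) - xstar
          = (1 - η) • (x t - xstar) + η • (T (x t) - xstar) := by
        module
      calc ‖(1 - η) • x t + η • T (x t) - xstar‖
          ≤ ‖(1 - η) • (x t - xstar)‖ + ‖η • (T (x t) - xstar)‖ := by
            rw [h2]; exact norm_add_le _ _
        _ = (1 - η) * ‖x t - xstar‖ + η * ‖T (x t) - xstar‖ := by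
            rw [norm_smul, norm_smul, Real.norm_eq_abs, Real.norm_eq_abs,
              abs_of_nonneg (by linarith), abs_of_pos hη0]
        _ ≤ (1 - η) * ‖x t - xstar‖ + η * ‖x t - xstar‖ := by
            have := hquasi (x t)
            nlinarith
        _ = ‖x t - xstar‖ := by ring
    have hsplit : x (t + 1) - xstar
        = α t • (x t - β • f' (x t) - xstar)
          + (1 - α t) • ((1 - η) • x t + η • T (x t) - xstar) := by
      rw [hrec t]; module
    have hn : ‖x (t + 1) - xstar‖
        ≤ α t * ((1 - γ) * ‖x t - xstar‖ + β * ‖f' xstar‖)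
          + (1 - α t) * ‖x t - xstar‖ := by
      calc ‖x (t + 1) - xstar‖
          ≤ ‖α t • (x t - β • f' (x t) - xstar)‖
            + ‖(1 - α t) • ((1 - η) • x t + η • T (x t) - xstar)‖ := by
            rw [hsplit]; exact norm_add_le _ _
        _ = α t * ‖x t - β • f' (x t) - xstar‖
            + (1 - α t) * ‖(1 - η) • x t + η • T (x t) - xstar‖ := by
            rw [norm_smul, norm_smul, Real.norm_eq_abs, Real.norm_eq_abs,
              abs_of_nonneg hα0, abs_of_nonneg (by linarith)]
        _ ≤ _ := by
            have := mul_le_mul_of_nonneg_left hgrad hα0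
            have := mul_le_mul_of_nonneg_left hThat (by linarith : (0:ℝ) ≤ 1 - α t)
            linarith
    have hxt : ‖x t - xstar‖ ≤ M := ih
    nlinarith [hn, mul_le_mul_of_nonneg_left hxt hα0,
      mul_le_mul_of_nonneg_left hxt (by linarith : (0:ℝ) ≤ 1 - α t),
      mul_nonneg hα0 (sub_nonneg.2 hxt)]
end

section
/- Let T be quasi-nonexpansive with fixed point x* on a real Hilbert space, T̂ = (1−η)Id + ηT with η ∈ (0,1], f differentiable, β > 0, α ∈ [0,1], and x⁺ = α(x − β∇f(x)) + (1−α)T̂(x). Then with C(y) := (1/2)‖y − x*‖², the inequality C(x⁺) − C(x) ≤ (1/2)‖x⁺ − x‖² − α⟨β∇f(x), x − x*⟩ − (η/2)(1−α)‖x − T(x)‖² holds. -/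
/-! Expanding `½‖x⁺ - x*‖² = ½‖(x⁺ - x) + (x - x*)‖²` leaves the cross term `⟪x⁺ - x, x - x*⟫`.
The step `x⁺ - x` is a combination of the gradient step and of `x - T x`, and quasi-nonexpansiveness
of `T` at `x*` bounds `⟪x - T x, x - x*⟫` below by `½‖x - T x‖²`. -/

open RealInnerProductSpace

section

variable {H : Type*} [NormedAddCommGroup H] [InnerProductSpace ℝ H]

theorem half_norm_sub_sq_sub_half_norm_sub_sq (u x z : H) :
    (1 / 2) * ‖u - z‖ ^ 2 - (1 / 2) * ‖x - z‖ ^ 2 =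
      (1 / 2) * ‖u - x‖ ^ 2 + ⟪u - x, x - z⟫ := by
  have h := norm_add_sq_real (u - x) (x - z)
  rw [sub_add_sub_cancel] at h
  linarith

theorem half_norm_sub_sq_le_inner_of_norm_sub_le {a b z : H} (h : ‖b - z‖ ≤ ‖a - z‖) :
    (1 / 2) * ‖a - b‖ ^ 2 ≤ ⟪a - b, a - z⟫ := by
  have hsq : ‖b - z‖ ^ 2 ≤ ‖a - z‖ ^ 2 := pow_le_pow_left₀ (norm_nonneg _) h 2
  have hpol := norm_sub_sq_real (a - z) (a - b)
  rw [sub_sub_sub_cancel_left, real_inner_comm] at hpol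
  linarith

end

theorem one_step_lyapunov_ineq_general
    {H : Type*} [NormedAddCommGroup H] [InnerProductSpace ℝ H]
    (T : H → H) (xstar : H)
    (hquasi : ∀ y, ‖T y - xstar‖ ≤ ‖y - xstar‖)
    (f' : H → H)
    (β η α : ℝ) (hη : η ∈ Set.Ioc (0 : ℝ) 1)
    (hα : α ∈ Set.Icc (0 : ℝ) 1)
    (x xplus : H)
    (hx : xplus = α • (x - β • f' x) + (1 - α) • ((1 - η) • x + η • T x)) :
    (1 / 2) * ‖xplus - xstar‖ ^ 2 - (1 / 2) * ‖x - xstar‖ ^ 2 ≤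
      (1 / 2) * ‖xplus - x‖ ^ 2 - α * inner ℝ (β • f' x) (x - xstar) -
        (η / 2) * (1 - α) * ‖x - T x‖ ^ 2 := by
  have hstep : xplus - x = -(α • β • f' x) - ((1 - α) * η) • (x - T x) := by
    rw [hx]; module
  have hcross : ⟪xplus - x, x - xstar⟫ =
      -(α * ⟪β • f' x, x - xstar⟫) - (1 - α) * η * ⟪x - T x, x - xstar⟫ := by
    rw [hstep, inner_sub_left, inner_neg_left, real_inner_smul_left, real_inner_smul_left,
      real_inner_smul_left]
  have hfejer : (1 - α) * η * ((1 / 2) * ‖x - T x‖ ^ 2) ≤ (1 - α) * η * ⟪x - T x, x - xstar⟫ :=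
    mul_le_mul_of_nonneg_left (half_norm_sub_sq_le_inner_of_norm_sub_le (hquasi x))
      (mul_nonneg (sub_nonneg.2 hα.2) hη.1.le)
  rw [half_norm_sub_sq_sub_half_norm_sub_sq, hcross]
  linarith

/-- One-step Lyapunov inequality: with C(y) = ½‖y − x*‖² and
x⁺ = α(x − β∇f(x)) + (1−α)T̂(x), T̂ = (1−η)Id + ηT,
C(x⁺) − C(x) ≤ ½‖x⁺ − x‖² − α⟨β∇f(x), x − x*⟩ − (η/2)(1−α)‖x − T(x)‖². -/
theorem one_step_lyapunov_ineq
    {H : Type*} [NormedAddCommGroup H] [InnerProductSpace ℝ H]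
    (T : H → H) (xstar : H) (hfix : T xstar = xstar)
    (hquasi : ∀ y, ‖T y - xstar‖ ≤ ‖y - xstar‖)
    (f : H → ℝ) (f' : H → H)
    (β η α : ℝ) (hβ : 0 < β) (hη : η ∈ Set.Ioc (0 : ℝ) 1)
    (hα : α ∈ Set.Icc (0 : ℝ) 1)
    (x xplus : H)
    (hx : xplus = α • (x - β • f' x) + (1 - α) • ((1 - η) • x + η • T x)) :
    (1 / 2) * ‖xplus - xstar‖ ^ 2 - (1 / 2) * ‖x - xstar‖ ^ 2 ≤
      (1 / 2) * ‖xplus - x‖ ^ 2 - α * inner ℝ (β • f' x) (x - xstar) -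
        (η / 2) * (1 - α) * ‖x - T x‖ ^ 2 :=
  one_step_lyapunov_ineq_general T xstar hquasi f' β η α hη hα x xplus hx
end
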